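/- arXiv:2303.12875 — 6 statements merged into one kernel-verified Lean document; each statement's English description precedes it below -/
import Mathlib

section
/- Let Q be a symmetric positive-definite n×n M-matrix (i.e., Q ≻ 0 and Q_{ij} ≤ 0 for i ≠ j) with all eigenvalues at most L, and let g(x) = ⟨x, Qx⟩/2 - ⟨b, x⟩ for some b ∈ ℝⁿ. If x ∈ ℝⁿ satisfies ∇g(x) ≤ 0 componentwise, then the gradient-descent update x⁺ = x - (1/L)∇g(x) also satisfies ∇g(x⁺) ≤ 0 componentwise. -/
/-!
The gradient after the step is `(1 - L⁻¹ Q)` applied to the old gradient. That matrix is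
entrywise nonnegative (off the diagonal because `Q` is an M-matrix, on it because
`Q i i = eᵢᵀ Q eᵢ ≤ L`), so it maps nonpositive vectors to nonpositive vectors.
-/

open Matrix

namespace Matrix

variable {ι R : Type*}

theorem diag_le_of_dotProduct_mulVec_le [Fintype ι] [DecidableEq ι] [Semiring R] [Preorder R]
    {Q : Matrix ι ι R} {L : R} (hQ : ∀ x : ι → R, x ⬝ᵥ Q *ᵥ x ≤ L * (x ⬝ᵥ x)) (i : ι) :
    Q i i ≤ L := by
  simpa [mulVec_single_one, single_dotProduct] using hQ (Pi.single i 1)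

theorem one_sub_smul_apply_nonneg [DecidableEq ι] [Ring R] [PartialOrder R] [IsOrderedRing R]
    {Q : Matrix ι ι R} {c : R} (hc : 0 ≤ c) (hoff : ∀ i j, i ≠ j → Q i j ≤ 0)
    (hdiag : ∀ i, c * Q i i ≤ 1) (i j : ι) :
    0 ≤ (1 - c • Q) i j := by
  rcases eq_or_ne i j with rfl | hij
  · simpa using hdiag i
  · simpa [one_apply_ne hij] using mul_nonpos_of_nonneg_of_nonpos hc (hoff i j hij)

theorem mulVec_nonpos_of_nonneg [Fintype ι] [Semiring R] [PartialOrder R] [IsOrderedRing R]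
    {A : Matrix ι ι R} {v : ι → R} (hA : ∀ i j, 0 ≤ A i j) (hv : ∀ i, v i ≤ 0) (i : ι) :
    (A *ᵥ v) i ≤ 0 :=
  Finset.sum_nonpos fun j _ => mul_nonpos_of_nonneg_of_nonpos (hA i j) (hv j)

theorem mulVec_gradient_step_sub [Fintype ι] [DecidableEq ι] [CommRing R]
    (Q : Matrix ι ι R) (b x : ι → R) (c : R) :
    Q *ᵥ (x - c • (Q *ᵥ x - b)) - b = (1 - c • Q) *ᵥ (Q *ᵥ x - b) := by
  rw [mulVec_sub, mulVec_smul, sub_mulVec, one_mulVec, smul_mulVec]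
  abel

end Matrix

theorem stmt_0_general (n : ℕ) (Q : Matrix (Fin n) (Fin n) ℝ) (b : Fin n → ℝ) (L : ℝ)
    (hM : ∀ i j : Fin n, i ≠ j → Q i j ≤ 0)
    (hL : 0 < L)
    (hEig : ∀ x : Fin n → ℝ, x ⬝ᵥ Q.mulVec x ≤ L * (x ⬝ᵥ x))
    (x : Fin n → ℝ)
    (hgrad : ∀ i, (Q.mulVec x - b) i ≤ 0) :
    ∀ i, (Q.mulVec (x - (1 / L) • (Q.mulVec x - b)) - b) i ≤ 0 := by
  have hdiag (i : Fin n) : 1 / L * Q i i ≤ 1 := by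
    rw [one_div_mul_eq_div, div_le_one hL]
    exact diag_le_of_dotProduct_mulVec_le hEig i
  rw [mulVec_gradient_step_sub]
  exact mulVec_nonpos_of_nonneg (one_sub_smul_apply_nonneg (by positivity) hM hdiag) hgrad

/-- For a symmetric positive-definite M-matrix `Q` with eigenvalues at most `L`
and `g x = ⟨x, Qx⟩/2 - ⟨b, x⟩` (so `∇g x = Q x - b`), if `∇g(x) ≤ 0` componentwise then the
gradient step `x⁺ = x - (1/L) ∇g(x)` also satisfies `∇g(x⁺) ≤ 0` componentwise. -/
theorem stmt_0 (n : ℕ) (Q : Matrix (Fin n) (Fin n) ℝ) (b : Fin n → ℝ) (L : ℝ)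
    (hQsymm : Q.IsSymm) (hQpd : Q.PosDef)
    (hM : ∀ i j : Fin n, i ≠ j → Q i j ≤ 0)
    (hL : 0 < L)
    (hEig : ∀ x : Fin n → ℝ, x ⬝ᵥ Q.mulVec x ≤ L * (x ⬝ᵥ x))
    (x : Fin n → ℝ)
    (hgrad : ∀ i, (Q.mulVec x - b) i ≤ 0) :
    ∀ i, (Q.mulVec (x - (1 / L) • (Q.mulVec x - b)) - b) i ≤ 0 :=
  stmt_0_general n Q b L hM hL hEig x hgrad
end

section
/- Let Q be a symmetric n×n matrix with α·I ⪯ Q ⪯ L·I for 0 < α ≤ L, let C ⊆ ℝⁿ be a nonempty closed convex set, g(x) = ⟨x, Qx⟩/2 - ⟨b, x⟩, and let x* = argmin_{x ∈ C} g(x). Then the projected gradient descent iterates x^{t+1} = proj_C(x^t - (1/L)∇g(x^t)) satisfy ‖x^t - x*‖² ≤ (1 - α/L)^t ‖x^0 - x*‖² for all t ≥ 0. -/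
open Matrix

/-- If `c ≥ -(t*K)` for all `t ∈ (0,1]` and `K ≥ 0`, then `c ≥ 0`. -/
lemma aux_limit_nonneg (c K : ℝ) (hK : 0 ≤ K)
    (h : ∀ t : ℝ, 0 < t → t ≤ 1 → -(t * K) ≤ c) : 0 ≤ c := by
  rcases eq_or_lt_of_le hK with h0 | h0
  · simpa [← h0] using h 1 one_pos le_rfl
  · by_contra hc
    push_neg at hc
    have ht0 : (0:ℝ) < min 1 (-c / (2 * K)) :=
      lt_min one_pos (div_pos (by linarith) (by positivity))
    have ht1 := h _ ht0 (min_le_left _ _)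
    have ht2 : min 1 (-c / (2 * K)) * K ≤ -c / 2 := by
      have h3 := min_le_right 1 (-c / (2 * K))
      have : (-c / (2 * K)) * K = -c / 2 := by field_simp
      nlinarith
    linarith

/-- linear convergence of projected gradient descent with step `1/L` for the
quadratic `g x = ⟨x, Qx⟩/2 - ⟨b, x⟩` with `α I ⪯ Q ⪯ L I`, over a nonempty closed convex
set `C`: `‖x^t - x*‖² ≤ (1 - α/L)^t ‖x⁰ - x*‖²`. The projection is characterized as the
point of `C` of minimal Euclidean distance (squared norms written via the dot product). -/
theorem stmt_3 (n : ℕ) (Q : Matrix (Fin n) (Fin n) ℝ) (b : Fin n → ℝ) (α L : ℝ)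
    (hα : 0 < α) (hαL : α ≤ L)
    (hQsymm : Q.IsSymm)
    (hlow : ∀ v : Fin n → ℝ, α * (v ⬝ᵥ v) ≤ v ⬝ᵥ Q.mulVec v)
    (hup : ∀ v : Fin n → ℝ, v ⬝ᵥ Q.mulVec v ≤ L * (v ⬝ᵥ v))
    (C : Set (Fin n → ℝ)) (hCconv : Convex ℝ C) (hCclosed : IsClosed C) (hCne : C.Nonempty)
    (g : (Fin n → ℝ) → ℝ)
    (hg : ∀ x, g x = (1/2) * (x ⬝ᵥ Q.mulVec x) - b ⬝ᵥ x)
    (xstar : Fin n → ℝ) (hxstarC : xstar ∈ C) (hxstarmin : ∀ z ∈ C, g xstar ≤ g z)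
    (x : ℕ → Fin n → ℝ) (hx0 : x 0 ∈ C)
    (hstep : ∀ t : ℕ, x (t+1) ∈ C ∧ ∀ z ∈ C,
      ((x t - (1/L) • (Q.mulVec (x t) - b)) - x (t+1)) ⬝ᵥ
        ((x t - (1/L) • (Q.mulVec (x t) - b)) - x (t+1)) ≤
      ((x t - (1/L) • (Q.mulVec (x t) - b)) - z) ⬝ᵥ
        ((x t - (1/L) • (Q.mulVec (x t) - b)) - z)) :
    ∀ t : ℕ, (x t - xstar) ⬝ᵥ (x t - xstar) ≤
      (1 - α / L) ^ t * ((x 0 - xstar) ⬝ᵥ (x 0 - xstar)) := by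
  have hL : 0 < L := hα.trans_le hαL
  have hsym : ∀ v w : Fin n → ℝ, v ⬝ᵥ Q *ᵥ w = w ⬝ᵥ Q *ᵥ v := by
    intro v w
    rw [Matrix.dotProduct_mulVec, ← Matrix.mulVec_transpose, hQsymm.eq, dotProduct_comm]
  have hself : ∀ v : Fin n → ℝ, 0 ≤ v ⬝ᵥ v := fun v =>
    Finset.sum_nonneg fun i _ => mul_self_nonneg _
  have hQpos : ∀ v : Fin n → ℝ, 0 ≤ v ⬝ᵥ Q *ᵥ v := fun v =>
    le_trans (mul_nonneg hα.le (hself v)) (hlow v)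
  -- expansion of squared norms
  have expand : ∀ (u w : Fin n → ℝ) (a : ℝ),
      (u - a • w) ⬝ᵥ (u - a • w) = u ⬝ᵥ u - 2*a*(u ⬝ᵥ w) + a^2*(w ⬝ᵥ w) := by
    intro u w a
    simp only [dotProduct_sub, sub_dotProduct, dotProduct_smul,
      smul_dotProduct, smul_eq_mul]
    rw [dotProduct_comm w u]; ring
  have expand1 : ∀ (u w : Fin n → ℝ),
      (u - w) ⬝ᵥ (u - w) = u ⬝ᵥ u - 2*(u ⬝ᵥ w) + w ⬝ᵥ w := by
    intro u w
    have h := expand u w 1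
    rw [one_smul] at h
    rw [h]; ring
  -- Cauchy–Schwarz for the Q-form
  have hCS : ∀ v w : Fin n → ℝ, (v ⬝ᵥ Q *ᵥ w)^2 ≤ (v ⬝ᵥ Q *ᵥ v) * (w ⬝ᵥ Q *ᵥ w) := by
    intro v w
    have h := discrim_le_zero (a := w ⬝ᵥ Q *ᵥ w) (b := 2 * (v ⬝ᵥ Q *ᵥ w)) (c := v ⬝ᵥ Q *ᵥ v) ?_
    · rw [discrim] at h; nlinarith [h]
    · intro s
      have h2 := hQpos (v + s • w)
      simp only [Matrix.mulVec_add, Matrix.mulVec_smul, dotProduct_add,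
        add_dotProduct, dotProduct_smul, smul_dotProduct, smul_eq_mul] at h2
      have h3 := hsym w v
      rw [h3] at h2
      nlinarith [h2]
  -- consequence: ⟨Qv, Qv⟩ ≤ L ⟨v, Qv⟩
  have hQQ : ∀ v : Fin n → ℝ, (Q *ᵥ v) ⬝ᵥ (Q *ᵥ v) ≤ L * (v ⬝ᵥ Q *ᵥ v) := by
    intro v
    have h1 := hCS v (Q *ᵥ v)
    have h2 : v ⬝ᵥ Q *ᵥ (Q *ᵥ v) = (Q *ᵥ v) ⬝ᵥ (Q *ᵥ v) := hsym v (Q *ᵥ v)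
    have h3 := hup (Q *ᵥ v)
    have hT : 0 ≤ (Q *ᵥ v) ⬝ᵥ (Q *ᵥ v) := hself _
    have hS : 0 ≤ v ⬝ᵥ Q *ᵥ v := hQpos v
    rcases eq_or_lt_of_le hT with h0 | h0
    · rw [← h0]; exact mul_nonneg hL.le hS
    · rw [h2] at h1
      nlinarith [h1, h3, mul_le_mul_of_nonneg_left h3 hS]
  -- quadratic expansion of g along a segment
  have hexpg : ∀ (x0 d : Fin n → ℝ) (t : ℝ),
      g (x0 + t • d) - g x0 = t * ((Q *ᵥ x0 - b) ⬝ᵥ d) + t^2/2 * (d ⬝ᵥ Q *ᵥ d) := by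
    intro x0 d t
    rw [hg, hg]
    simp only [Matrix.mulVec_add, Matrix.mulVec_smul, dotProduct_add,
      add_dotProduct, dotProduct_smul, smul_dotProduct,
      sub_dotProduct, dotProduct_sub, smul_eq_mul]
    rw [dotProduct_comm (Q *ᵥ x0) d]
    linear_combination (t/2) * hsym x0 d
  -- variational inequality at the minimizer
  have hopt : ∀ z ∈ C, 0 ≤ (Q *ᵥ xstar - b) ⬝ᵥ (z - xstar) := by
    intro z hz
    apply aux_limit_nonneg _ (((z - xstar) ⬝ᵥ Q *ᵥ (z - xstar)) / 2)
      (by linarith [hQpos (z - xstar)])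
    intro t ht0 ht1
    have hmem : xstar + t • (z - xstar) ∈ C := by
      have h := hCconv hxstarC hz (by linarith : (0:ℝ) ≤ 1 - t) ht0.le (by ring)
      convert h using 1
      module
    have hge := hxstarmin _ hmem
    have hexp := hexpg xstar (z - xstar) t
    nlinarith [hge, hexp, ht0]
  -- variational inequality for the projection step
  have hproj : ∀ t : ℕ, ∀ z ∈ C,
      ((x t - (1/L) • (Q.mulVec (x t) - b)) - x (t+1)) ⬝ᵥ (z - x (t+1)) ≤ 0 := by
    intro t z hz
    obtain ⟨hpC, hmin⟩ := hstep t
    have key := aux_limit_nonneg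
      (-(((x t - (1/L) • (Q.mulVec (x t) - b)) - x (t+1)) ⬝ᵥ (z - x (t+1))))
      (((z - x (t+1)) ⬝ᵥ (z - x (t+1))) / 2) (by linarith [hself (z - x (t+1))]) ?_
    · linarith
    · intro s hs0 hs1
      have hmem : x (t+1) + s • (z - x (t+1)) ∈ C := by
        have h := hCconv hpC hz (by linarith : (0:ℝ) ≤ 1 - s) hs0.le (by ring)
        convert h using 1
        module
      have h6 := hmin _ hmem
      have h7 : (x t - (1/L) • (Q.mulVec (x t) - b)) - (x (t+1) + s • (z - x (t+1)))
          = ((x t - (1/L) • (Q.mulVec (x t) - b)) - x (t+1)) - s • (z - x (t+1)) := by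
        module
      rw [h7, expand] at h6
      nlinarith [h6, hs0]
  -- one-step contraction
  have hcontr : ∀ t : ℕ, (x (t+1) - xstar) ⬝ᵥ (x (t+1) - xstar) ≤
      (1 - α / L) * ((x t - xstar) ⬝ᵥ (x t - xstar)) := by
    intro t
    set y := x t - (1/L) • (Q.mulVec (x t) - b) with hy
    set ystar := xstar - (1/L) • (Q.mulVec xstar - b) with hystar
    set p := x (t+1) with hpdef
    set w := p - xstar with hw
    set v := x t - xstar with hv
    have h1 : (y - p) ⬝ᵥ (xstar - p) ≤ 0 := hproj t xstar hxstarC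
    have h2 : 0 ≤ (Q *ᵥ xstar - b) ⬝ᵥ w := hopt p (hstep t).1
    have hL' : (0:ℝ) ≤ 1/L := by positivity
    -- step A : ⟨w,w⟩ ≤ ⟨y - ystar, w⟩
    have hA : w ⬝ᵥ w ≤ (y - ystar) ⬝ᵥ w := by
      have e1 : (y - ystar) ⬝ᵥ w - w ⬝ᵥ w = (y - p) ⬝ᵥ w - (ystar - xstar) ⬝ᵥ w := by
        rw [← sub_dotProduct, ← sub_dotProduct]
        congr 1
        rw [hw]; abel
      have e2 : (y - p) ⬝ᵥ w = -((y - p) ⬝ᵥ (xstar - p)) := by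
        rw [hw, show p - xstar = -(xstar - p) by abel, dotProduct_neg]
      have e3 : (ystar - xstar) ⬝ᵥ w = -((1/L) * ((Q *ᵥ xstar - b) ⬝ᵥ w)) := by
        rw [show ystar - xstar = -((1/L) • (Q *ᵥ xstar - b)) by rw [hystar]; abel,
          neg_dotProduct, smul_dotProduct, smul_eq_mul]
      nlinarith [h1, h2, e1, e2, e3, mul_nonneg hL' h2]
    -- step B : ⟨w,w⟩ ≤ ⟨y - ystar, y - ystar⟩
    have hB : w ⬝ᵥ w ≤ (y - ystar) ⬝ᵥ (y - ystar) := by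
      have h := hself ((y - ystar) - w)
      rw [expand1] at h
      linarith
    -- step C : ⟨y - ystar, y - ystar⟩ ≤ (1 - α/L) ⟨v,v⟩
    have hu : y - ystar = v - (1/L) • (Q *ᵥ v) := by
      rw [hy, hystar, hv, Matrix.mulVec_sub]
      module
    have hC : (y - ystar) ⬝ᵥ (y - ystar) ≤ (1 - α / L) * (v ⬝ᵥ v) := by
      rw [hu, expand]
      have k1 := hQQ v
      have k2 := hlow v
      have k5 : (1/L)^2 * ((Q *ᵥ v) ⬝ᵥ (Q *ᵥ v)) ≤ (1/L) * (v ⬝ᵥ Q *ᵥ v) := by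
        have ha := mul_le_mul_of_nonneg_left k1 (by positivity : (0:ℝ) ≤ (1/L)^2)
        have hb : (1/L)^2 * (L * (v ⬝ᵥ Q *ᵥ v)) = (1/L) * (v ⬝ᵥ Q *ᵥ v) := by
          field_simp
        linarith
      have k6 : (α/L) * (v ⬝ᵥ v) ≤ (1/L) * (v ⬝ᵥ Q *ᵥ v) := by
        have ha := mul_le_mul_of_nonneg_left k2 hL'
        have hb : (1/L) * (α * (v ⬝ᵥ v)) = (α/L) * (v ⬝ᵥ v) := by ring
        linarith
      nlinarith [k5, k6]
    calc (x (t+1) - xstar) ⬝ᵥ (x (t+1) - xstar) = w ⬝ᵥ w := rfl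
      _ ≤ (y - ystar) ⬝ᵥ (y - ystar) := hB
      _ ≤ (1 - α / L) * (v ⬝ᵥ v) := hC
  -- induction
  have hfac : (0:ℝ) ≤ 1 - α / L := by
    rw [sub_nonneg]
    exact div_le_one_of_le₀ hαL hL.le
  intro t
  induction t with
  | zero => simp
  | succ k ih =>
    calc (x (k+1) - xstar) ⬝ᵥ (x (k+1) - xstar)
        ≤ (1 - α / L) * ((x k - xstar) ⬝ᵥ (x k - xstar)) := hcontr k
      _ ≤ (1 - α / L) * ((1 - α / L) ^ k * ((x 0 - xstar) ⬝ᵥ (x 0 - xstar))) :=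
          mul_le_mul_of_nonneg_left ih hfac
      _ = (1 - α / L) ^ (k+1) * ((x 0 - xstar) ⬝ᵥ (x 0 - xstar)) := by ring
end

section
/- Let g(x) = ⟨x, Qx⟩/2 - ⟨b, x⟩ with Q a symmetric positive-definite M-matrix, let S ⊆ [n], and suppose x⁰ ∈ ℝⁿ with x⁰ ≥ 0 satisfies x⁰ᵢ = 0 for i ∉ S and ∇ᵢg(x⁰) ≤ 0 for i ∈ S. Let C = span{eᵢ : i ∈ S} ∩ ℝⁿ_{≥0} and x^{*,C} = argmin_{x ∈ C} g(x). Then x⁰ ≤ x^{*,C} componentwise and ∇ᵢg(x^{*,C}) = 0 for all i ∈ S. -/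
open Matrix

/-- The quadratic objective `g x = ⟨x, Qx⟩/2 - ⟨b, x⟩`. -/
noncomputable def quadObj {n : ℕ} (Q : Matrix (Fin n) (Fin n) ℝ) (b x : Fin n → ℝ) : ℝ :=
  (1/2) * (x ⬝ᵥ Q.mulVec x) - b ⬝ᵥ x

lemma symm_dot {n : ℕ} (Q : Matrix (Fin n) (Fin n) ℝ) (hQ : Q.IsSymm) (v w : Fin n → ℝ) :
    v ⬝ᵥ Q.mulVec w = w ⬝ᵥ Q.mulVec v := by
  rw [Matrix.dotProduct_mulVec, ← Matrix.mulVec_transpose, hQ, dotProduct_comm]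

lemma quad_expand {n : ℕ} (Q : Matrix (Fin n) (Fin n) ℝ) (hQ : Q.IsSymm) (b x u : Fin n → ℝ) :
    quadObj Q b (x + u) =
      quadObj Q b x + (Q.mulVec x - b) ⬝ᵥ u + (1/2) * (u ⬝ᵥ Q.mulVec u) := by
  have h := symm_dot Q hQ x u
  simp only [quadObj, Matrix.mulVec_add, dotProduct_add, add_dotProduct,
    sub_dotProduct]
  rw [h, dotProduct_comm u (Q.mulVec x)]
  ring

lemma cross_nonpos {n : ℕ} (Q : Matrix (Fin n) (Fin n) ℝ)
    (hM : ∀ i j : Fin n, i ≠ j → Q i j ≤ 0) (u w : Fin n → ℝ)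
    (hu : ∀ i, 0 ≤ u i) (hw : ∀ i, 0 ≤ w i) (hd : ∀ i, u i * w i = 0) :
    u ⬝ᵥ Q.mulVec w ≤ 0 := by
  simp only [dotProduct, Matrix.mulVec]
  apply Finset.sum_nonpos
  intro i _
  rw [Finset.mul_sum]
  apply Finset.sum_nonpos
  intro j _
  rcases eq_or_ne i j with rfl | hij
  · rcases mul_eq_zero.mp (hd i) with h | h <;> simp [h]
  · have hq := hM i j hij
    have := mul_nonneg (hu i) (hw j)
    nlinarith

/-- Proposition 3, item 1: if `x⁰ ≥ 0` vanishes off `S` and has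
`∇ᵢg(x⁰) ≤ 0` for `i ∈ S`, then the minimizer `x^{*,C}` of `g` over
`C = span{eᵢ : i ∈ S} ∩ ℝⁿ₊` satisfies `x⁰ ≤ x^{*,C}` and `∇ᵢg(x^{*,C}) = 0` on `S`. -/
theorem stmt_7 (n : ℕ) (Q : Matrix (Fin n) (Fin n) ℝ) (b : Fin n → ℝ)
    (hQsymm : Q.IsSymm) (hQpd : Q.PosDef)
    (hM : ∀ i j : Fin n, i ≠ j → Q i j ≤ 0)
    (S : Set (Fin n)) (x0 : Fin n → ℝ)
    (hx0nonneg : ∀ i, 0 ≤ x0 i)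
    (hx0supp : ∀ i ∉ S, x0 i = 0)
    (hx0grad : ∀ i ∈ S, (Q.mulVec x0 - b) i ≤ 0)
    (xC : Fin n → ℝ)
    (hxCmem : (∀ i, 0 ≤ xC i) ∧ ∀ i ∉ S, xC i = 0)
    (hxCmin : ∀ z : Fin n → ℝ, ((∀ i, 0 ≤ z i) ∧ ∀ i ∉ S, z i = 0) →
      quadObj Q b xC ≤ quadObj Q b z) :
    (∀ i, x0 i ≤ xC i) ∧ ∀ i ∈ S, (Q.mulVec xC - b) i = 0 := by
  obtain ⟨hxCnn, hxCsupp⟩ := hxCmem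
  -- positive diagonal
  have hdiag : ∀ i : Fin n, 0 < Q i i := by
    intro i
    have h := hQpd.dotProduct_mulVec_pos (x := Pi.single i 1) (by
      intro h
      have := congrFun h i
      simp at this)
    simpa [single_dotProduct, Matrix.mulVec_single] using h
  -- Part 1 : x0 ≤ xC
  set u : Fin n → ℝ := fun i => max (x0 i - xC i) 0 with hu_def
  set w : Fin n → ℝ := fun i => max (xC i - x0 i) 0 with hw_def
  have hu_nn : ∀ i, 0 ≤ u i := fun i => le_max_right _ _
  have hw_nn : ∀ i, 0 ≤ w i := fun i => le_max_right _ _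
  have huw : ∀ i, u i - w i = x0 i - xC i := by
    intro i
    rcases le_total (x0 i) (xC i) with h | h <;>
      simp [hu_def, hw_def, max_eq_left, max_eq_right, sub_nonpos.2 h, sub_nonneg.2 h] <;> ring
  have hdisj : ∀ i, u i * w i = 0 := by
    intro i
    rcases le_total (x0 i) (xC i) with h | h
    · simp [hu_def, sub_nonpos.2 h]
    · simp [hw_def, sub_nonpos.2 h]
  have hu_supp : ∀ i ∉ S, u i = 0 := by
    intro i hi
    have h1 := hx0supp i hi
    have h2 := hxCnn i
    simp [hu_def, h1]
    linarith
  -- xC + u is feasible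
  have hz : (∀ i, 0 ≤ (xC + u) i) ∧ ∀ i ∉ S, (xC + u) i = 0 := by
    constructor
    · intro i; have := hu_nn i; have := hxCnn i; simp [Pi.add_apply]; linarith
    · intro i hi; simp [Pi.add_apply, hxCsupp i hi, hu_supp i hi]
  have hmin := hxCmin _ hz
  rw [quad_expand Q hQsymm b xC u] at hmin
  have hkey : 0 ≤ (Q.mulVec xC - b) ⬝ᵥ u + (1/2) * (u ⬝ᵥ Q.mulVec u) := by linarith
  -- rewrite gradient at xC in terms of gradient at x0
  have hgradrel : (Q.mulVec xC - b) ⬝ᵥ u =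
      (Q.mulVec x0 - b) ⬝ᵥ u - u ⬝ᵥ Q.mulVec u + u ⬝ᵥ Q.mulVec w := by
    have hx0eq : x0 = xC + (u - w) := by
      funext i
      have := huw i
      simp [Pi.add_apply, Pi.sub_apply]
      linarith
    rw [hx0eq]
    simp only [Matrix.mulVec_add, Matrix.mulVec_sub, sub_dotProduct,
      add_dotProduct]
    have h1 : (Q.mulVec u) ⬝ᵥ u = u ⬝ᵥ Q.mulVec u := dotProduct_comm _ _
    have h2 : (Q.mulVec w) ⬝ᵥ u = u ⬝ᵥ Q.mulVec w := dotProduct_comm _ _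
    rw [h1, h2]
    ring
  have hgrad0u : (Q.mulVec x0 - b) ⬝ᵥ u ≤ 0 := by
    apply Finset.sum_nonpos
    intro i _
    by_cases hiS : i ∈ S
    · exact mul_nonpos_of_nonpos_of_nonneg (hx0grad i hiS) (hu_nn i)
    · simp [hu_supp i hiS]
  have hcross : u ⬝ᵥ Q.mulVec w ≤ 0 := cross_nonpos Q hM u w hu_nn hw_nn hdisj
  have huQu : u ⬝ᵥ Q.mulVec u ≤ 0 := by
    rw [hgradrel] at hkey
    linarith
  have hu0 : u = 0 := by
    by_contra h
    have := hQpd.dotProduct_mulVec_pos (x := u) h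
    simp only [star_trivial] at this
    linarith
  have hle : ∀ i, x0 i ≤ xC i := by
    intro i
    have h := congrFun hu0 i
    simp only [hu_def, Pi.zero_apply] at h
    have h2 : x0 i - xC i ≤ max (x0 i - xC i) 0 := le_max_left _ _
    rw [h] at h2
    linarith
  refine ⟨hle, ?_⟩
  -- Part 2
  intro i hiS
  set g' := (Q.mulVec xC - b) i with hg'
  have ha := hdiag i
  -- expansion for single perturbation
  have hsingle : ∀ t : ℝ, quadObj Q b (xC + Pi.single i t) =
      quadObj Q b xC + g' * t + (1/2) * (t * (Q i i * t)) := by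
    intro t
    rw [quad_expand Q hQsymm b xC (Pi.single i t)]
    simp [dotProduct_single, Matrix.mulVec_single, single_dotProduct, hg']
    exact Or.inl (mul_comm _ _)
  -- (a) 0 ≤ g'
  have hge : 0 ≤ g' := by
    by_contra hgc
    push_neg at hgc
    set t : ℝ := -g' / Q i i with ht_def
    have ht : 0 < t := div_pos (neg_pos.2 hgc) ha
    have hat : Q i i * t = -g' := by
      rw [ht_def]; field_simp
    have hzfeas : (∀ j, 0 ≤ (xC + Pi.single i t : Fin n → ℝ) j) ∧
        ∀ j ∉ S, (xC + Pi.single i t : Fin n → ℝ) j = 0 := by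
      constructor
      · intro j
        rcases eq_or_ne j i with rfl | hji
        · have h1 := hxCnn j
          have h2 : (xC + Pi.single j t : Fin n → ℝ) j = xC j + t := by simp
          rw [h2]; linarith
        · have h2 : (xC + Pi.single i t : Fin n → ℝ) j = xC j := by
            simp [Pi.single_eq_of_ne hji]
          rw [h2]; exact hxCnn j
      · intro j hj
        have hji : j ≠ i := fun h => hj (h ▸ hiS)
        have h2 : (xC + Pi.single i t : Fin n → ℝ) j = xC j := by
          simp [Pi.single_eq_of_ne hji]
        rw [h2]; exact hxCsupp j hj
    have hmin2 := hxCmin _ hzfeas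
    rw [hsingle t] at hmin2
    rw [hat] at hmin2
    nlinarith [mul_neg_of_neg_of_pos hgc ht]
  -- (b) g' ≤ 0
  have hle2 : g' ≤ 0 := by
    rcases eq_or_lt_of_le (hxCnn i) with hxi0 | hxipos
    · -- xC i = 0, use M-matrix comparison
      have hx0i : x0 i = 0 := le_antisymm (hxi0 ▸ hle i) (hx0nonneg i)
      have hrel : g' = (Q.mulVec x0 - b) i + (Q.mulVec (xC - x0)) i := by
        simp only [hg', Matrix.mulVec_sub, Pi.sub_apply]
        ring
      have hsum : (Q.mulVec (xC - x0)) i ≤ 0 := by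
        simp only [Matrix.mulVec, dotProduct]
        apply Finset.sum_nonpos
        intro j _
        rcases eq_or_ne j i with rfl | hji
        · simp [Pi.sub_apply, hx0i, ← hxi0]
        · have h1 := hM i j (Ne.symm hji)
          have h2 : 0 ≤ (xC - x0) j := by simp [Pi.sub_apply]; linarith [hle j]
          exact mul_nonpos_of_nonpos_of_nonneg h1 h2
      have := hx0grad i hiS
      linarith [hrel ▸ add_le_add this hsum]
    · -- xC i > 0, perturb downwards
      by_contra hgc
      push_neg at hgc
      set t : ℝ := min (xC i) (g' / Q i i) with ht_def
      have ht : 0 < t := lt_min hxipos (div_pos hgc ha)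
      have hta : Q i i * t ≤ g' := by
        have : t ≤ g' / Q i i := min_le_right _ _
        rw [le_div_iff₀ ha] at this
        linarith [this]
      have hzfeas : (∀ j, 0 ≤ (xC + Pi.single i (-t) : Fin n → ℝ) j) ∧
          ∀ j ∉ S, (xC + Pi.single i (-t) : Fin n → ℝ) j = 0 := by
        constructor
        · intro j
          rcases eq_or_ne j i with rfl | hji
          · have h1 : t ≤ xC j := min_le_left _ _
            have h2 : (xC + Pi.single j (-t) : Fin n → ℝ) j = xC j + (-t) := by simp
            rw [h2]; linarith
          · have h2 : (xC + Pi.single i (-t) : Fin n → ℝ) j = xC j := by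
              simp [Pi.single_eq_of_ne hji]
            rw [h2]; exact hxCnn j
        · intro j hj
          have hji : j ≠ i := fun h => hj (h ▸ hiS)
          have h2 : (xC + Pi.single i (-t) : Fin n → ℝ) j = xC j := by
            simp [Pi.single_eq_of_ne hji]
          rw [h2]; exact hxCsupp j hj
      have hmin2 := hxCmin _ hzfeas
      rw [hsingle (-t)] at hmin2
      nlinarith [mul_pos hgc ht, mul_le_mul_of_nonneg_right hta (le_of_lt ht)]
  linarith
end

section
/- Let g(x) = ⟨x, Qx⟩/2 - ⟨b, x⟩ with Q a symmetric positive-definite M-matrix, S ⊆ [n], C = span{eᵢ : i ∈ S} ∩ ℝⁿ_{≥0}, x^{*,C} = argmin_{x ∈ C} g(x), and x* = argmin_{x ≥ 0} g(x). If x^{*,C}ᵢ > 0 for all i ∈ S and there exists x⁰ ≥ 0 with x⁰ᵢ = 0 for i ∉ S and ∇ᵢg(x⁰) ≤ 0 for i ∈ S, then x^{*,C} ≤ x* componentwise, and in particular S ⊆ supp(x*). -/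
open Matrix

section aux

variable {n : ℕ} (Q : Matrix (Fin n) (Fin n) ℝ)

lemma bil_expand (u v : Fin n → ℝ) :
    u ⬝ᵥ Q.mulVec v = ∑ i, ∑ j, u i * (Q i j * v j) := by
  simp [dotProduct, mulVec, Finset.mul_sum]

lemma bil_symm (hQsymm : Q.IsSymm) (u v : Fin n → ℝ) :
    u ⬝ᵥ Q.mulVec v = v ⬝ᵥ Q.mulVec u := by
  rw [bil_expand, bil_expand, Finset.sum_comm]
  refine Finset.sum_congr rfl fun i _ => Finset.sum_congr rfl fun j _ => ?_
  have h : Q j i = Q i j := by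
    conv_lhs => rw [← hQsymm]
    rfl
  rw [h]; ring

/-- midpoint identity -/
lemma mid_identity (hQsymm : Q.IsSymm) (b u v : Fin n → ℝ) :
    quadObj Q b (fun i => (u i + v i) / 2) =
      (quadObj Q b u + quadObj Q b v) / 2
        - (1/8) * ((u - v) ⬝ᵥ Q.mulVec (u - v)) := by
  have huv := bil_symm Q hQsymm u v
  have e1 : (fun i => (u i + v i) / 2) = (1/2 : ℝ) • (u + v) := by
    funext i; simp [Pi.smul_apply]; ring
  have h1 : (fun i => (u i + v i) / 2) ⬝ᵥ Q.mulVec (fun i => (u i + v i) / 2)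
      = (1/4) * (u ⬝ᵥ Q.mulVec u + 2 * (u ⬝ᵥ Q.mulVec v) + v ⬝ᵥ Q.mulVec v) := by
    rw [e1, smul_dotProduct, Matrix.mulVec_smul, dotProduct_smul, Matrix.mulVec_add,
      dotProduct_add, add_dotProduct, add_dotProduct, smul_eq_mul, smul_eq_mul, huv]
    ring
  have h2 : (u - v) ⬝ᵥ Q.mulVec (u - v)
      = u ⬝ᵥ Q.mulVec u - 2 * (u ⬝ᵥ Q.mulVec v) + v ⬝ᵥ Q.mulVec v := by
    rw [Matrix.mulVec_sub, dotProduct_sub, sub_dotProduct, sub_dotProduct, huv]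
    ring
  have h3 : b ⬝ᵥ (fun i => (u i + v i) / 2) = (b ⬝ᵥ u + b ⬝ᵥ v) / 2 := by
    rw [e1, dotProduct_smul, dotProduct_add, smul_eq_mul]
    ring
  simp only [quadObj, h1, h2, h3]
  ring

/-- submodularity of the quadratic form for M-matrices -/
lemma submod (hQsymm : Q.IsSymm) (hM : ∀ i j : Fin n, i ≠ j → Q i j ≤ 0)
    (u v : Fin n → ℝ) :
    (fun i => min (u i) (v i)) ⬝ᵥ Q.mulVec (fun i => min (u i) (v i))
      + (fun i => max (u i) (v i)) ⬝ᵥ Q.mulVec (fun i => max (u i) (v i))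
      ≤ u ⬝ᵥ Q.mulVec u + v ⬝ᵥ Q.mulVec v := by
  rw [bil_expand, bil_expand, bil_expand, bil_expand,
    ← Finset.sum_add_distrib, ← Finset.sum_add_distrib]
  refine Finset.sum_le_sum fun i _ => ?_
  rw [← Finset.sum_add_distrib, ← Finset.sum_add_distrib]
  refine Finset.sum_le_sum fun j _ => ?_
  by_cases hij : i = j
  · subst hij
    rcases le_total (u i) (v i) with h | h
    · exact le_of_eq (by rw [min_eq_left h, max_eq_right h])
    · exact le_of_eq (by rw [min_eq_right h, max_eq_left h]; ring)
  · have hq := hM i j hij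
    have key : u i * u j + v i * v j ≤
        min (u i) (v i) * min (u j) (v j) + max (u i) (v i) * max (u j) (v j) := by
      rcases le_total (u i) (v i) with h1 | h1 <;> rcases le_total (u j) (v j) with h2 | h2 <;>
        simp [min_eq_left, min_eq_right, max_eq_left, max_eq_right, h1, h2] <;> nlinarith
    nlinarith

end aux

/-- Proposition 3, item 3: if the minimizer `x^{*,C}` over
`C = span{eᵢ : i ∈ S} ∩ ℝⁿ₊` is strictly positive on `S` and there exists a point `x⁰ ≥ 0`
vanishing off `S` with `∇g(x⁰) ≤ 0` on `S`, then `x^{*,C} ≤ x*` componentwise, where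
`x* = argmin_{x ≥ 0} g(x)`; in particular `S ⊆ supp(x*)`. -/
theorem stmt_9 (n : ℕ) (Q : Matrix (Fin n) (Fin n) ℝ) (b : Fin n → ℝ)
    (hQsymm : Q.IsSymm) (hQpd : Q.PosDef)
    (hM : ∀ i j : Fin n, i ≠ j → Q i j ≤ 0)
    (S : Set (Fin n)) (x0 : Fin n → ℝ)
    (hx0nonneg : ∀ i, 0 ≤ x0 i)
    (hx0supp : ∀ i ∉ S, x0 i = 0)
    (hx0grad : ∀ i ∈ S, (Q.mulVec x0 - b) i ≤ 0)
    (xC : Fin n → ℝ)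
    (hxCmem : (∀ i, 0 ≤ xC i) ∧ ∀ i ∉ S, xC i = 0)
    (hxCmin : ∀ z : Fin n → ℝ, ((∀ i, 0 ≤ z i) ∧ ∀ i ∉ S, z i = 0) →
      quadObj Q b xC ≤ quadObj Q b z)
    (hxCpos : ∀ i ∈ S, 0 < xC i)
    (xstar : Fin n → ℝ)
    (hxstarmem : ∀ i, 0 ≤ xstar i)
    (hxstarmin : ∀ z : Fin n → ℝ, (∀ i, 0 ≤ z i) →
      quadObj Q b xstar ≤ quadObj Q b z) :
    (∀ i, xC i ≤ xstar i) ∧ S ⊆ {i : Fin n | xstar i ≠ 0} := by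
  obtain ⟨hxCnn, hxCsupp⟩ := hxCmem
  set m : Fin n → ℝ := fun i => min (xC i) (xstar i) with hm
  set Mx : Fin n → ℝ := fun i => max (xC i) (xstar i) with hMx
  -- feasibility of m in C
  have hmfeas : (∀ i, 0 ≤ m i) ∧ ∀ i ∉ S, m i = 0 := by
    constructor
    · intro i; exact le_min (hxCnn i) (hxstarmem i)
    · intro i hi
      show min (xC i) (xstar i) = 0
      rw [hxCsupp i hi]
      exact min_eq_left (hxstarmem i)
  have hMfeas : ∀ i, 0 ≤ Mx i := fun i => le_trans (hxCnn i) (le_max_left _ _)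
  have h1 : quadObj Q b xC ≤ quadObj Q b m := hxCmin m hmfeas
  have h2 : quadObj Q b xstar ≤ quadObj Q b Mx := hxstarmin Mx hMfeas
  -- submodularity
  have hsub : quadObj Q b m + quadObj Q b Mx ≤ quadObj Q b xC + quadObj Q b xstar := by
    have hquad : m ⬝ᵥ Q.mulVec m + Mx ⬝ᵥ Q.mulVec Mx
        ≤ xC ⬝ᵥ Q.mulVec xC + xstar ⬝ᵥ Q.mulVec xstar := submod Q hQsymm hM xC xstar
    have hlin : b ⬝ᵥ m + b ⬝ᵥ Mx = b ⬝ᵥ xC + b ⬝ᵥ xstar := by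
      simp only [dotProduct, ← Finset.sum_add_distrib]
      refine Finset.sum_congr rfl fun i _ => ?_
      have hmm : m i + Mx i = xC i + xstar i := min_add_max _ _
      linear_combination b i * hmm
    simp only [quadObj]
    linarith
  have heq : quadObj Q b m = quadObj Q b xC := by linarith
  -- strict convexity: midpoint of xC and m
  have hd : xC = m := by
    by_contra hne
    have hdne : xC - m ≠ 0 := sub_ne_zero.mpr hne
    have hpos : 0 < (xC - m) ⬝ᵥ Q.mulVec (xC - m) := by
      have := hQpd.dotProduct_mulVec_pos hdne
      simpa using this
    have hmidfeas : (∀ i, 0 ≤ (fun i => (xC i + m i) / 2) i)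
        ∧ ∀ i ∉ S, (fun i => (xC i + m i) / 2) i = 0 := by
      constructor
      · intro i
        have h1 := hxCnn i; have h2 := hmfeas.1 i
        positivity
      · intro i hi
        simp only
        rw [hxCsupp i hi, hmfeas.2 i hi]
        norm_num
    have hmid := hxCmin _ hmidfeas
    rw [mid_identity Q hQsymm b xC m, heq] at hmid
    linarith
  have hle : ∀ i, xC i ≤ xstar i := by
    intro i
    have h : xC i = min (xC i) (xstar i) := congrFun hd i
    exact h.le.trans (min_le_right _ _)
  refine ⟨hle, fun i hi => ?_⟩
  have h1 := hxCpos i hi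
  have h2 := hle i
  simp only [Set.mem_setOf_eq]
  intro h0
  rw [h0] at h2
  linarith
end

section
/- Let g be α-strongly convex and L-smooth on ℝⁿ_{≥0} with minimizer x* = argmin_{x ≥ 0} g(x), and let x ∈ ℝⁿ_{≥0}. Let y = proj_{ℝⁿ_{≥0}}(x - (1/L)∇g(x)). If g(x) - g(x̂) ≤ (εα)/L for the minimizer x̂ of g over a closed convex set C ⊆ ℝⁿ_{≥0} containing x, and g(x) - g(x*) > ε, then g(x̂) > g(y); in particular y ∉ C. -/
open Matrix

/-- One-dimensional projection step inequality. -/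
lemma stmt_16_aux (L c a t m : ℝ) (hL : 0 < L) (ht : 0 ≤ t) (hc : c = L * (a - m)) :
    c * (max 0 m - a) + L / 2 * ((max 0 m - a) * (max 0 m - a)) ≤
    c * (t - a) + L / 2 * ((t - a) * (t - a)) := by
  subst hc
  rcases le_total m 0 with h | h
  · rw [max_eq_left h]
    nlinarith [mul_nonneg (mul_nonneg hL.le ht) (neg_nonneg.2 h),
      mul_nonneg hL.le (mul_self_nonneg t)]
  · rw [max_eq_right h]
    nlinarith [mul_nonneg hL.le (mul_self_nonneg (t - m))]

/-- progress detection in ASPR: let `g` be `α`-strongly convex and `L`-smooth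
on the nonnegative orthant (expressed via its gradient `g'`), `x*` its minimizer over the
orthant, `x̂` its minimizer over a closed convex set `C` contained in the orthant and
containing `x`, and `y = proj_{ℝⁿ₊}(x - (1/L)∇g(x))` (componentwise `max 0`).
If `g(x) - g(x̂) ≤ εα/L` and `g(x) - g(x*) > ε`, then `g(x̂) > g(y)`; in particular `y ∉ C`. -/
theorem stmt_16 (n : ℕ) (α L ε : ℝ) (hα : 0 < α) (hαL : α ≤ L) (hε : 0 < ε)
    (g : (Fin n → ℝ) → ℝ) (g' : (Fin n → ℝ) → Fin n → ℝ)
    (hsc : ∀ x y : Fin n → ℝ,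
      g x + g' x ⬝ᵥ (y - x) + α / 2 * ((y - x) ⬝ᵥ (y - x)) ≤ g y)
    (hsm : ∀ x y : Fin n → ℝ,
      g y ≤ g x + g' x ⬝ᵥ (y - x) + L / 2 * ((y - x) ⬝ᵥ (y - x)))
    (C : Set (Fin n → ℝ)) (hCconv : Convex ℝ C) (hCclosed : IsClosed C)
    (hCorth : ∀ z ∈ C, ∀ i, 0 ≤ z i)
    (x : Fin n → ℝ) (hxC : x ∈ C)
    (xhat : Fin n → ℝ) (hxhatC : xhat ∈ C) (hxhatmin : ∀ z ∈ C, g xhat ≤ g z)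
    (xstar : Fin n → ℝ) (hxstarmem : ∀ i, 0 ≤ xstar i)
    (hxstarmin : ∀ z : Fin n → ℝ, (∀ i, 0 ≤ z i) → g xstar ≤ g z)
    (y : Fin n → ℝ) (hy : ∀ i, y i = max 0 (x i - (1 / L) * g' x i))
    (hgap : g x - g xhat ≤ ε * α / L)
    (hfar : ε < g x - g xstar) :
    g y < g xhat ∧ y ∉ C := by
  have hL : 0 < L := lt_of_lt_of_le hα hαL
  set lam : ℝ := α / L with hlam
  have hlam0 : 0 < lam := div_pos hα hL
  have hlam1 : lam ≤ 1 := by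
    rw [hlam, div_le_one hL]; exact hαL
  set z : Fin n → ℝ := fun i => x i + lam * (xstar i - x i) with hz
  have hx0 : ∀ i, 0 ≤ x i := hCorth x hxC
  have hz0 : ∀ i, 0 ≤ z i := by
    intro i
    have h1 := hx0 i
    have h2 := hxstarmem i
    simp only [hz]
    nlinarith
  -- key quadratic comparison
  have hQ : g' x ⬝ᵥ (y - x) + L / 2 * ((y - x) ⬝ᵥ (y - x)) ≤
      g' x ⬝ᵥ (z - x) + L / 2 * ((z - x) ⬝ᵥ (z - x)) := by
    simp only [dotProduct, Pi.sub_apply, Finset.mul_sum, ← Finset.sum_add_distrib]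
    apply Finset.sum_le_sum
    intro i _
    rw [hy i]
    exact stmt_16_aux L (g' x i) (x i) (z i) (x i - 1 / L * g' x i) hL (hz0 i)
      (by field_simp; ring)
  set S : ℝ := g' x ⬝ᵥ (xstar - x) with hS
  set D : ℝ := (xstar - x) ⬝ᵥ (xstar - x) with hD
  have hD0 : 0 ≤ D := by
    rw [hD]
    exact Finset.sum_nonneg fun i _ => mul_self_nonneg _
  have hzd1 : g' x ⬝ᵥ (z - x) = lam * S := by
    rw [hS]
    simp only [dotProduct, Pi.sub_apply, hz, Finset.mul_sum]
    exact Finset.sum_congr rfl fun i _ => by ring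
  have hzd2 : (z - x) ⬝ᵥ (z - x) = lam * lam * D := by
    rw [hD]
    simp only [dotProduct, Pi.sub_apply, hz, Finset.mul_sum]
    exact Finset.sum_congr rfl fun i _ => by ring
  have h1 := hsm x y
  have h2 := hsc x xstar
  -- g y ≤ g x + lam * (g xstar - g x)
  have hLlam : L * lam = α := by
    rw [hlam]; field_simp
  have hstep : g y ≤ g x + lam * (g xstar - g x) := by
    have hSle : S ≤ g xstar - g x - α / 2 * D := by
      rw [hS, hD] at *
      linarith [h2]
    calc g y ≤ g x + g' x ⬝ᵥ (y - x) + L / 2 * ((y - x) ⬝ᵥ (y - x)) := h1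
      _ ≤ g x + g' x ⬝ᵥ (z - x) + L / 2 * ((z - x) ⬝ᵥ (z - x)) := by linarith
      _ = g x + lam * S + L / 2 * (lam * lam * D) := by rw [hzd1, hzd2]
      _ ≤ g x + lam * (g xstar - g x - α / 2 * D) + L / 2 * (lam * lam * D) := by
          nlinarith
      _ = g x + lam * (g xstar - g x) + lam / 2 * (L * lam - α) * D := by ring
      _ = g x + lam * (g xstar - g x) := by rw [hLlam]; ring
  have hmain : g y < g xhat := by
    have h4 : lam * ε < lam * (g x - g xstar) :=
      (mul_lt_mul_iff_right₀ hlam0).mpr hfar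
    have h5 : lam * ε = ε * α / L := by rw [hlam]; ring
    linarith
  refine ⟨hmain, fun hyC => ?_⟩
  exact absurd (hxhatmin y hyC) (not_le.mpr hmain)
end

section
/- Let x* be the (nonnegative) minimizer of the ℓ1-regularized PageRank objective g(x) = ⟨x, Qx⟩/2 + α⟨s + ρ𝟙, D^{-1/2}x⟩ over ℝⁿ_{≥0}, with Q = αI + ((1-α)/2)ℒ, α ∈ (0,1), ρ ≤ 1, s ∈ Δⁿ. Then ‖x*‖² ≤ (1/α²)(1 + √(vol(S*)))² |S*|, where S* = supp(x*) and vol(S*) = Σ_{i ∈ S*} dᵢ + |S*|. -/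
open Matrix

set_option maxHeartbeats 1000000 in
/-- norm bound on the minimizer of the ℓ1-regularized PageRank objective
`g x = ⟨x, Qx⟩/2 - α⟨s, D^{-1/2}x⟩ + αρ⟨𝟙, D^{1/2}x⟩` over the nonnegative orthant,
with `Q = αI + ((1-α)/2)ℒ`: `‖x*‖² ≤ (1/α²)(1 + √vol(S*))² |S*|`, where
`S* = supp(x*)` and `vol(S*) = Σ_{i ∈ S*} dᵢ + |S*|`. -/
theorem stmt_18 (n : ℕ) (G : SimpleGraph (Fin n)) [DecidableRel G.Adj]
    (hconn : G.Connected) (hdeg : ∀ i, 0 < G.degree i)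
    (α ρ : ℝ) (hα0 : 0 < α) (hα1 : α < 1) (hρ0 : 0 < ρ) (hρ1 : ρ ≤ 1)
    (s : Fin n → ℝ) (hs0 : ∀ i, 0 ≤ s i) (hs1 : ∑ i, s i = 1)
    (d : Fin n → ℝ) (hd : ∀ i, d i = (G.degree i : ℝ))
    (Q : Matrix (Fin n) (Fin n) ℝ)
    (hQ : Q = α • (1 : Matrix (Fin n) (Fin n) ℝ) + ((1 - α) / 2) •
      ((1 : Matrix (Fin n) (Fin n) ℝ) -
        Matrix.diagonal (fun i => (Real.sqrt (d i))⁻¹) * G.adjMatrix ℝ *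
        Matrix.diagonal (fun i => (Real.sqrt (d i))⁻¹)))
    (g : (Fin n → ℝ) → ℝ)
    (hg : ∀ x, g x = (1/2) * (x ⬝ᵥ Q.mulVec x) - α * (∑ i, s i * x i / Real.sqrt (d i))
      + α * ρ * ∑ i, Real.sqrt (d i) * x i)
    (xstar : Fin n → ℝ)
    (hxstarmem : ∀ i, 0 ≤ xstar i)
    (hxstarmin : ∀ z : Fin n → ℝ, (∀ i, 0 ≤ z i) → g xstar ≤ g z)
    (Sstar : Finset (Fin n)) (hSstar : Sstar = Finset.univ.filter (fun i => 0 < xstar i))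
    (vol : ℝ) (hvol : vol = (∑ i ∈ Sstar, d i) + Sstar.card) :
    xstar ⬝ᵥ xstar ≤ (1 / α ^ 2) * (1 + Real.sqrt vol) ^ 2 * Sstar.card := by
  have hd1 : ∀ i, (1 : ℝ) ≤ d i := by
    intro i; rw [hd]; exact_mod_cast hdeg i
  have hdpos : ∀ i, (0 : ℝ) < d i := fun i => lt_of_lt_of_le one_pos (hd1 i)
  -- PSD of the normalized Laplacian
  have hPSD : 0 ≤ xstar ⬝ᵥ (((1 : Matrix (Fin n) (Fin n) ℝ) -
        Matrix.diagonal (fun i => (Real.sqrt (d i))⁻¹) * G.adjMatrix ℝ *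
        Matrix.diagonal (fun i => (Real.sqrt (d i))⁻¹)) *ᵥ xstar) := by
    set e : Fin n → ℝ := fun i => (Real.sqrt (d i))⁻¹ with he
    set y : Fin n → ℝ := fun i => e i * xstar i with hy
    have hDx : Matrix.diagonal e *ᵥ xstar = y := by
      ext i; simp [Matrix.mulVec_diagonal, hy]
    have hdot : ∀ w : Fin n → ℝ, xstar ⬝ᵥ (Matrix.diagonal e *ᵥ w) = y ⬝ᵥ w := by
      intro w
      simp only [dotProduct, Matrix.mulVec_diagonal, hy]
      exact Finset.sum_congr rfl fun i _ => by ring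
    have h1 : xstar ⬝ᵥ ((Matrix.diagonal e * G.adjMatrix ℝ * Matrix.diagonal e) *ᵥ xstar)
        = y ⬝ᵥ (G.adjMatrix ℝ *ᵥ y) := by
      rw [← Matrix.mulVec_mulVec, ← Matrix.mulVec_mulVec, hDx, hdot]
    have h2 : xstar ⬝ᵥ xstar = y ⬝ᵥ (G.degMatrix ℝ *ᵥ y) := by
      simp only [dotProduct]
      refine Finset.sum_congr rfl fun i _ => ?_
      rw [SimpleGraph.degMatrix_mulVec_apply, hy, ← hd]
      have key : e i * e i * d i = 1 := by
        simp only [he]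
        field_simp
        rw [Real.sq_sqrt (hdpos i).le]; exact div_self (hdpos i).ne'
      linear_combination (-(xstar i * xstar i)) * key
    have := (SimpleGraph.posSemidef_lapMatrix ℝ G).dotProduct_mulVec_nonneg y
    rw [star_trivial] at this
    rw [Matrix.sub_mulVec, dotProduct_sub, Matrix.one_mulVec, h1, h2]
    rw [SimpleGraph.lapMatrix, Matrix.sub_mulVec, dotProduct_sub] at this
    exact this
  set t : ℝ := xstar ⬝ᵥ xstar with ht
  have ht0 : 0 ≤ t := Finset.sum_nonneg fun i _ => mul_self_nonneg _
  -- quadratic lower bound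
  have hquad : α * t ≤ xstar ⬝ᵥ Q *ᵥ xstar := by
    rw [hQ, Matrix.add_mulVec, dotProduct_add, Matrix.smul_mulVec,
      Matrix.smul_mulVec, dotProduct_smul, dotProduct_smul,
      Matrix.one_mulVec, smul_eq_mul, smul_eq_mul]
    have hc : (0:ℝ) ≤ (1 - α) / 2 := by linarith
    nlinarith [mul_nonneg hc hPSD]
  -- g(xstar) ≤ g(0) = 0
  have hg0 : g 0 = 0 := by
    rw [hg]; simp
  have hgle : g xstar ≤ 0 := hg0 ▸ hxstarmin 0 (fun i => le_rfl)
  rw [hg] at hgle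
  set S1 : ℝ := ∑ i, s i * xstar i / Real.sqrt (d i) with hS1
  set S2 : ℝ := ∑ i, Real.sqrt (d i) * xstar i with hS2
  have hS2nn : 0 ≤ S2 :=
    Finset.sum_nonneg fun i _ => mul_nonneg (Real.sqrt_nonneg _) (hxstarmem i)
  -- support sum
  set u : ℝ := ∑ i ∈ Sstar, xstar i with hu
  have hzero : ∀ i ∉ Sstar, xstar i = 0 := by
    intro i hi
    rw [hSstar, Finset.mem_filter] at hi
    push_neg at hi
    have := hi (Finset.mem_univ i)
    linarith [hxstarmem i]
  have husum : u = ∑ i, xstar i := by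
    rw [hu]
    exact Finset.sum_subset (Finset.subset_univ _) (fun i _ hi => hzero i hi)
  have hS1u : S1 ≤ u := by
    rw [hS1, husum]
    refine Finset.sum_le_sum fun i _ => ?_
    have hsi : s i ≤ 1 := by
      calc s i ≤ ∑ j, s j := Finset.single_le_sum (fun j _ => hs0 j) (Finset.mem_univ i)
        _ = 1 := hs1
    have hsq1 : (1:ℝ) ≤ Real.sqrt (d i) := by
      rw [show (1:ℝ) = Real.sqrt 1 by simp]
      exact Real.sqrt_le_sqrt (hd1 i)
    have hx := hxstarmem i
    rw [div_le_iff₀ (by linarith : (0:ℝ) < Real.sqrt (d i))]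
    nlinarith
  have hun : 0 ≤ u := Finset.sum_nonneg fun i _ => hxstarmem i
  -- t ≤ 2u
  have htu : t ≤ 2 * u := by
    have h1 : α * t ≤ 2 * α * S1 - 2 * α * ρ * S2 := by nlinarith
    have h2 : α * t ≤ 2 * α * u := by nlinarith [mul_nonneg (mul_nonneg hα0.le hρ0.le) hS2nn]
    have := (mul_le_mul_iff_right₀ hα0).mp (by linarith : α * t ≤ α * (2 * u))
    linarith
  -- Cauchy-Schwarz
  set c : ℝ := (Sstar.card : ℝ) with hc
  have hcs : u ^ 2 ≤ c * t := by
    have h1 : u ^ 2 ≤ c * ∑ i ∈ Sstar, xstar i ^ 2 := by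
      rw [hu, hc]; exact sq_sum_le_card_mul_sum_sq
    have h2 : ∑ i ∈ Sstar, xstar i ^ 2 ≤ t := by
      rw [ht]
      simp only [dotProduct, ← sq]
      exact Finset.sum_le_sum_of_subset_of_nonneg (Finset.subset_univ _)
        (fun i _ _ => sq_nonneg _)
    have hc0 : 0 ≤ c := Nat.cast_nonneg _
    nlinarith
  rcases Finset.eq_empty_or_nonempty Sstar with hSe | hSne
  · have hu0 : u = 0 := by rw [hu, hSe]; simp
    have hc0 : c = 0 := by rw [hc, hSe]; simp
    rw [hc0, mul_zero]
    linarith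
  · have hc1 : 1 ≤ c := by
      rw [hc]; exact_mod_cast Finset.card_pos.mpr hSne
    have hu2c : u ≤ 2 * c := by nlinarith
    have ht4c : t ≤ 4 * c := by linarith
    have hvol1 : 1 ≤ vol := by
      rw [hvol]
      have : 0 ≤ ∑ i ∈ Sstar, d i := Finset.sum_nonneg fun i _ => (hdpos i).le
      linarith
    have hsv : 1 ≤ Real.sqrt vol := by
      rw [show (1:ℝ) = Real.sqrt 1 by simp]
      exact Real.sqrt_le_sqrt hvol1
    have hα2 : 1 ≤ 1 / α ^ 2 := by
      have h1 : α ^ 2 ≤ 1 := by nlinarith [sq_nonneg α]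
      rw [le_div_iff₀ (by positivity)]
      linarith
    have h4 : 4 ≤ (1 + Real.sqrt vol) ^ 2 := by
      have h2 : (2:ℝ) ≤ 1 + Real.sqrt vol := by linarith
      calc (4:ℝ) = 2 ^ 2 := by norm_num
        _ ≤ (1 + Real.sqrt vol) ^ 2 := pow_le_pow_left₀ (by norm_num) h2 2
    have hK : 4 ≤ (1 / α ^ 2) * (1 + Real.sqrt vol) ^ 2 :=
      le_trans h4 (le_mul_of_one_le_left (by positivity) hα2)
    calc t ≤ 4 * c := ht4c
      _ ≤ (1 / α ^ 2) * (1 + Real.sqrt vol) ^ 2 * c :=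
        mul_le_mul_of_nonneg_right hK (by linarith)
end
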